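/- arXiv:1705.00038 — 2 statements merged into one kernel-verified Lean document; each statement's English description precedes it below -/
import Mathlib

section
/- Tangent cones of Lipschitz normally embedded sets are Lipschitz normally embedded: if X ⊆ ℝ^m contains x₀, X has a unique tangent cone at x₀, and X is Lipschitz normally embedded with constant λ, then T_{x₀}X is Lipschitz normally embedded with constant at most 1 + λ. -/
open Set Filter Metric

/-- Length of a path `γ : [0,1] → E` measured via the (extended) variation. -/
noncomputable def pathLength {E : Type*} [NormedAddCommGroup E] (γ : ℝ → E) : ENNReal :=
  eVariationOn γ (Set.Icc 0 1)

/-- `γ` is a path in `X` from `x` to `y`, parametrized on `[0,1]`. -/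
def IsPathIn {E : Type*} [NormedAddCommGroup E] (X : Set E) (x y : E) (γ : ℝ → E) : Prop :=
  ContinuousOn γ (Set.Icc 0 1) ∧ Set.MapsTo γ (Set.Icc 0 1) X ∧ γ 0 = x ∧ γ 1 = y

/-- The inner (length) distance on `X`: the infimum of the lengths of paths in `X`
joining `x` to `y`. -/
noncomputable def innerDist {E : Type*} [NormedAddCommGroup E] (X : Set E) (x y : E) : ENNReal :=
  ⨅ γ ∈ {γ : ℝ → E | IsPathIn X x y γ}, pathLength γ

/-- The set of directions of `X` at `p` with respect to the sequence `t`. -/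
def dirSeqAt {E : Type*} [NormedAddCommGroup E] [NormedSpace ℝ E]
    (X : Set E) (p : E) (t : ℕ → ℝ) : Set E :=
  {v | ∃ x : ℕ → E, ∃ j₀ : ℕ, (∀ j, x j ∈ X \ {p}) ∧ (∀ j ≥ j₀, ‖x j - p‖ = t j) ∧
    Filter.Tendsto (fun j => (t j)⁻¹ • (x j - p)) Filter.atTop (nhds v)}

/-- `ρ_m⁻¹(X \ {0})`, viewed inside the ambient space `E × ℝ` (the blow-up
`S^{m-1} × [0,∞)` sits inside `E × ℝ` as `{(x, r) : ‖x‖ = 1, r ≥ 0}`,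
and `ρ_m (x, r) = r • x`). -/
def blowupPre {E : Type*} [NormedAddCommGroup E] [NormedSpace ℝ E] (X : Set E) :
    Set (E × ℝ) :=
  {q | ‖q.1‖ = 1 ∧ 0 < q.2 ∧ q.2 • q.1 ∈ X \ {0}}

/-- The cone (with vertex `0`) over a set of directions `D`. -/
def coneOver {E : Type*} [NormedAddCommGroup E] [NormedSpace ℝ E] (D : Set E) : Set E :=
  {p | ∃ t : ℝ, 0 ≤ t ∧ ∃ v ∈ D, p = t • v}

/-!
Rescaling `X` about `x₀` by factors `t j → 0` gives sets `Y j` that are Lipschitz normally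
embedded with the same constant `λ`, and uniqueness of the tangent cone makes `T` their limit:
every point of `T` is a limit of points of `Y j`, and every cluster point of a sequence of points
of `Y j` lies in `T`. Given `x, y ∈ T`, approximate them by points of `Y j` and join these by
nearly shortest paths in `Y j`. After reparametrizing by arc length these paths are uniformly
Lipschitz, so they have a pointwise limit along an ultrafilter (Arzelà–Ascoli); it is a path in
`T` from `x` to `y`, and by lower semicontinuity of length it is no longer than `λ ‖x - y‖`.
-/

open scoped NNReal ENNReal Topology

theorem HasConstantSpeedOnWith.lipschitzOnWith {E : Type*} [PseudoEMetricSpace E] {f : ℝ → E}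
    {s : Set ℝ} {l : ℝ≥0} (h : HasConstantSpeedOnWith f s l) : LipschitzOnWith l f s := by
  intro x hx y hy
  wlog hxy : x ≤ y generalizing x y
  · rw [edist_comm, edist_comm x]
    exact this hy hx (le_of_not_ge hxy)
  calc edist (f x) (f y) = edist (f y) (f x) := edist_comm _ _
    _ ≤ eVariationOn f (s ∩ Icc x y) := eVariationOn.edist_le f ⟨hy, hxy, le_rfl⟩ ⟨hx, le_rfl, hxy⟩
    _ = ENNReal.ofReal (l * (y - x)) := h hx hy
    _ = l * edist x y := by
      rw [edist_dist, Real.dist_eq, abs_sub_comm, abs_of_nonneg (sub_nonneg.2 hxy),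
        ENNReal.ofReal_mul l.coe_nonneg, ENNReal.ofReal_coe_nnreal]

theorem LipschitzOnWith.eVariationOn_Icc_le {E : Type*} [PseudoEMetricSpace E] {f : ℝ → E}
    {K : ℝ≥0} {a b : ℝ} (h : LipschitzOnWith K f (Icc a b)) :
    eVariationOn f (Icc a b) ≤ K * ENNReal.ofReal (b - a) := by
  simpa using h.comp_eVariationOn_le (mapsTo_id _)

theorem ContinuousOn.continuousOn_variationOnFromTo {α E : Type*} [LinearOrder α]
    [TopologicalSpace α] [OrderTopology α] [PseudoMetricSpace E] {f : α → E} {s : Set α}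
    (hf : ContinuousOn f s) (hbv : LocallyBoundedVariationOn f s) {a : α} (ha : a ∈ s) :
    ContinuousOn (variationOnFromTo f s a) s := by
  intro b hb
  have hleft := variationOnFromTo.tendsto_left ha hb hbv ((hf b hb).mono inter_subset_left)
  have hright := variationOnFromTo.tendsto_right ha hb hbv ((hf b hb).mono inter_subset_left)
  rw [dist_self, sub_zero] at hleft
  rw [dist_self, add_zero] at hright
  have hs : s \ {b} = s ∩ Iio b ∪ s ∩ Ioi b := by
    rw [sdiff_eq, ← Iio_union_Ioi, inter_union_distrib_left]
  rw [← continuousWithinAt_sdiff_self, hs]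
  exact ContinuousWithinAt.union hleft hright

theorem exists_lipschitzOnWith_reparam {E : Type*} [MetricSpace E] {f : ℝ → E}
    (hf : ContinuousOn f (Icc 0 1)) (hfin : eVariationOn f (Icc 0 1) ≠ ⊤) :
    ∃ g : ℝ → E, LipschitzOnWith (eVariationOn f (Icc 0 1)).toNNReal g (Icc 0 1) ∧
      g 0 = f 0 ∧ g 1 = f 1 ∧ MapsTo g (Icc 0 1) (f '' Icc 0 1) := by
  have hbv : LocallyBoundedVariationOn f (Icc 0 1) :=
    BoundedVariationOn.locallyBoundedVariationOn hfin
  have h0 : (0 : ℝ) ∈ Icc (0 : ℝ) 1 := left_mem_Icc.2 zero_le_one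
  have h1 : (1 : ℝ) ∈ Icc (0 : ℝ) 1 := right_mem_Icc.2 zero_le_one
  set ψ := variationOnFromTo f (Icc 0 1) 0
  set L := (eVariationOn f (Icc 0 1)).toNNReal
  set γ := naturalParameterization f (Icc 0 1) 0
  have hψ0 : ψ 0 = 0 := variationOnFromTo.self f _ 0
  have hψ1 : ψ 1 = L := by
    simp only [ψ, L, variationOnFromTo.eq_of_le _ _ zero_le_one, inter_self]
    rfl
  have hγψ : ∀ τ ∈ Icc (0 : ℝ) 1, γ (ψ τ) = f τ := fun τ hτ =>
    edist_eq_zero.1 (edist_naturalParameterization_eq_zero hbv h0 hτ)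
  have hscale : MapsTo (fun σ : ℝ => (L : ℝ) * σ) (Icc 0 1) (ψ '' Icc 0 1) := by
    intro σ hσ
    have hIVT := intermediate_value_Icc zero_le_one (hf.continuousOn_variationOnFromTo hbv h0)
    change Icc (ψ 0) (ψ 1) ⊆ ψ '' Icc 0 1 at hIVT
    rw [hψ0, hψ1] at hIVT
    exact hIVT ⟨mul_nonneg L.coe_nonneg hσ.1, mul_le_of_le_one_right L.coe_nonneg hσ.2⟩
  have hmul : LipschitzWith L (fun σ : ℝ => (L : ℝ) * σ) := by
    refine LipschitzWith.of_dist_le_mul fun a b => ?_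
    simp [Real.dist_eq, ← mul_sub, abs_mul]
  refine ⟨fun σ => γ (L * σ), ?_, ?_, ?_, ?_⟩
  · have := (has_unit_speed_naturalParameterization f hbv h0).lipschitzOnWith.comp
      hmul.lipschitzOnWith hscale
    rwa [one_mul] at this
  · simpa [hψ0] using hγψ 0 h0
  · simpa [hψ1] using hγψ 1 h1
  · intro σ hσ
    obtain ⟨τ, hτ, hψτ⟩ := hscale hσ
    exact ⟨τ, hτ, by simp only [← hψτ, hγψ τ hτ]⟩

theorem exists_tendsto_ultrafilter_of_lipschitzOnWith {ι α E : Type*} [PseudoMetricSpace α]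
    [PseudoMetricSpace E] [ProperSpace E] (u : Ultrafilter ι) {g : ι → α → E} {s : Set α}
    {K : ℝ≥0} (hg : ∀ᶠ i in u, LipschitzOnWith K (g i) s) {a : α} (ha : a ∈ s) {x : E}
    (hx : Tendsto (fun i => g i a) u (𝓝 x)) :
    ∃ F : α → E, LipschitzOnWith K F s ∧ ∀ σ ∈ s, Tendsto (fun i => g i σ) u (𝓝 (F σ)) := by
  have hconv : ∀ σ ∈ s, ∃ z, Tendsto (fun i => g i σ) u (𝓝 z) := by
    intro σ hσ
    have hball : ∀ᶠ i in u, g i σ ∈ closedBall x (K * dist σ a + 1) := by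
      filter_upwards [hg, hx.eventually (ball_mem_nhds x one_pos)] with i hi hix
      calc dist (g i σ) x ≤ dist (g i σ) (g i a) + dist (g i a) x := dist_triangle _ _ _
        _ ≤ K * dist σ a + 1 := add_le_add (hi.dist_le_mul σ hσ a ha) (mem_ball.1 hix).le
    obtain ⟨z, -, hz⟩ :=
      (isCompact_closedBall x _).ultrafilter_le_nhds' (u.map fun i => g i σ) hball
    exact ⟨z, hz⟩
  have : Nonempty E := ⟨x⟩
  choose! F hF using hconv
  refine ⟨F, LipschitzOnWith.of_dist_le_mul fun σ hσ τ hτ => ?_, hF⟩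
  exact le_of_tendsto ((hF σ hσ).dist (hF τ hτ)) (hg.mono fun i hi => hi.dist_le_mul σ hσ τ hτ)

theorem eVariationOn_le_of_tendsto {ι α E : Type*} [LinearOrder α] [PseudoEMetricSpace E]
    {l : Filter ι} [l.NeBot] {F : ι → α → E} {f : α → E} {s : Set α}
    (hF : ∀ x ∈ s, Tendsto (fun i => F i x) l (𝓝 (f x))) {b : ι → ℝ≥0∞} {b₀ : ℝ≥0∞}
    (hb : Tendsto b l (𝓝 b₀)) (hFb : ∀ᶠ i in l, eVariationOn (F i) s ≤ b i) :
    eVariationOn f s ≤ b₀ := by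
  refine le_of_forall_lt_imp_le_of_dense fun v hv => ge_of_tendsto hb ?_
  filter_upwards [eVariationOn.lowerSemicontinuous_aux hF hv, hFb] with i hvi hib
  exact (hvi.trans_le hib).le

section InnerDist

variable {E : Type*} [NormedAddCommGroup E]

theorem innerDist_le_pathLength {X : Set E} {x y : E} {γ : ℝ → E} (h : IsPathIn X x y γ) :
    innerDist X x y ≤ pathLength γ :=
  iInf₂_le γ h

theorem exists_isPathIn_of_innerDist_lt {X : Set E} {x y : E} {c : ℝ≥0∞}
    (h : innerDist X x y < c) : ∃ γ, IsPathIn X x y γ ∧ pathLength γ < c := by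
  simpa only [innerDist, iInf_lt_iff, exists_prop, mem_ofPred_eq] using h

theorem innerDist_map_le {F : Type*} [NormedAddCommGroup F] {X : Set E} {Y : Set F}
    {φ : E → F} {K : ℝ≥0} (hK : K ≠ 0) (hφ : LipschitzOnWith K φ X) (hXY : MapsTo φ X Y)
    (x y : E) : innerDist Y (φ x) (φ y) ≤ K * innerDist X x y := by
  simp only [innerDist, ENNReal.mul_iInf_of_ne (ENNReal.coe_ne_zero.2 hK) ENNReal.coe_ne_top]
  refine le_iInf₂ fun γ hγ => iInf₂_le_of_le (φ ∘ γ) ?_ (hφ.comp_eVariationOn_le hγ.2.1)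
  exact ⟨hφ.continuousOn.comp hγ.1 hγ.2.1, hXY.comp hγ.2.1, congrArg φ hγ.2.2.1,
    congrArg φ hγ.2.2.2⟩

end InnerDist

section Limit

variable {E : Type*} [NormedAddCommGroup E] [ProperSpace E]

theorem innerDist_le_of_isPathIn_of_tendsto {Y : ℕ → Set E} {C : Set E}
    (hC : ∀ w : ℕ → E, (∀ j, w j ∈ Y j) → ∀ z, MapClusterPt z atTop w → z ∈ C)
    {p q : ℕ → E} {x y : E} (hp : Tendsto p atTop (𝓝 x)) (hq : Tendsto q atTop (𝓝 y))
    {γ : ℕ → ℝ → E} (hγ : ∀ j, IsPathIn (Y j) (p j) (q j) (γ j)) {c : ℕ → ℝ} {c₀ : ℝ}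
    (hc : Tendsto c atTop (𝓝 c₀)) (hγc : ∀ j, pathLength (γ j) ≤ ENNReal.ofReal (c j)) :
    innerDist C x y ≤ ENNReal.ofReal c₀ := by
  have h0 : (0 : ℝ) ∈ Icc (0 : ℝ) 1 := left_mem_Icc.2 zero_le_one
  have h1 : (1 : ℝ) ∈ Icc (0 : ℝ) 1 := right_mem_Icc.2 zero_le_one
  choose g hgL hg0 hg1 hgγ using fun j =>
    exists_lipschitzOnWith_reparam (hγ j).1 (ne_top_of_le_ne_top ENNReal.ofReal_ne_top (hγc j))
  have hgL_le : ∀ j, ((eVariationOn (γ j) (Icc 0 1)).toNNReal : ℝ≥0∞) ≤ ENNReal.ofReal (c j) :=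
    fun j => ENNReal.coe_toNNReal_le_self.trans (hγc j)
  have hgK : ∀ᶠ j in atTop, LipschitzOnWith (c₀ + 1).toNNReal (g j) (Icc 0 1) := by
    filter_upwards [hc.eventually (eventually_le_nhds (lt_add_one c₀))] with j hj
    refine (hgL j).weaken ?_
    have := (hgL_le j).trans (ENNReal.ofReal_le_ofReal hj)
    rwa [ENNReal.ofReal, ENNReal.coe_le_coe] at this
  set u := Ultrafilter.of (atTop : Filter ℕ)
  have hu : (u : Filter ℕ) ≤ atTop := Ultrafilter.of_le _
  have hgp : Tendsto (fun j => g j 0) atTop (𝓝 x) :=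
    hp.congr fun j => ((hg0 j).trans (hγ j).2.2.1).symm
  have hgq : Tendsto (fun j => g j 1) atTop (𝓝 y) :=
    hq.congr fun j => ((hg1 j).trans (hγ j).2.2.2).symm
  obtain ⟨F, hFL, hF⟩ :=
    exists_tendsto_ultrafilter_of_lipschitzOnWith u (hu hgK) h0 (hgp.mono_left hu)
  have hFC : MapsTo F (Icc 0 1) C := fun σ hσ =>
    hC (fun j => g j σ) (fun j => (hγ j).2.1.image_subset (hgγ j hσ)) (F σ)
      (ClusterPt.mono (hF σ hσ).mapClusterPt (map_mono hu))
  have hFpath : IsPathIn C x y F := ⟨hFL.continuousOn, hFC,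
    tendsto_nhds_unique (hF 0 h0) (hgp.mono_left hu),
    tendsto_nhds_unique (hF 1 h1) (hgq.mono_left hu)⟩
  refine (innerDist_le_pathLength hFpath).trans <| eVariationOn_le_of_tendsto hF
    ((ENNReal.tendsto_ofReal hc).mono_left hu) (.of_forall fun j => ?_)
  simpa using (hgL j).eVariationOn_Icc_le.trans (by simpa using hgL_le j)

theorem innerDist_le_of_tendsto {Y : ℕ → Set E} {C : Set E}
    (hC : ∀ w : ℕ → E, (∀ j, w j ∈ Y j) → ∀ z, MapClusterPt z atTop w → z ∈ C)
    {p q : ℕ → E} {x y : E} (hp : Tendsto p atTop (𝓝 x)) (hq : Tendsto q atTop (𝓝 y))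
    {c : ℕ → ℝ} {c₀ : ℝ} (hc : Tendsto c atTop (𝓝 c₀))
    (hpq : ∀ j, innerDist (Y j) (p j) (q j) ≤ ENNReal.ofReal (c j)) :
    innerDist C x y ≤ ENNReal.ofReal c₀ := by
  set d : ℕ → ℝ := fun j => max (c j) 0 + 1 / ((j : ℝ) + 1)
  have hpq_lt : ∀ j, innerDist (Y j) (p j) (q j) < ENNReal.ofReal (d j) := fun j =>
    (hpq j).trans_lt <| ENNReal.ofReal_lt_ofReal_iff'.2
      ⟨lt_add_of_le_of_pos (le_max_left _ _) (by positivity),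
        add_pos_of_nonneg_of_pos (le_max_right _ _) (by positivity)⟩
  choose γ hγ hγd using fun j => exists_isPathIn_of_innerDist_lt (hpq_lt j)
  have hd : Tendsto d atTop (𝓝 (max c₀ 0 + 0)) :=
    (hc.max tendsto_const_nhds).add tendsto_one_div_add_atTop_nhds_zero_nat
  simpa using innerDist_le_of_isPathIn_of_tendsto hC hp hq hγ hd fun j => (hγd j).le

end Limit

section Cone

variable {E : Type*} [NormedAddCommGroup E] [NormedSpace ℝ E]

def LipschitzNormallyEmbeddedWith (lam : ℝ) (X : Set E) : Prop :=
  ∀ x ∈ X, ∀ y ∈ X, innerDist X x y ≤ ENNReal.ofReal (lam * ‖x - y‖)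

theorem LipschitzNormallyEmbeddedWith.preimage_homothety {lam : ℝ} {X : Set E}
    (h : LipschitzNormallyEmbeddedWith lam X) (x₀ : E) {c : ℝ} (hc : 0 < c) :
    LipschitzNormallyEmbeddedWith lam ((fun w => x₀ + c • w) ⁻¹' X) := by
  intro u hu v hv
  have hφ : LipschitzOnWith c⁻¹.toNNReal (fun z => c⁻¹ • (z - x₀)) X :=
    LipschitzOnWith.of_dist_le_mul fun a _ b _ => by
      rw [dist_smul₀, dist_sub_right, Real.norm_of_nonneg (inv_nonneg.2 hc.le),
        Real.coe_toNNReal _ (inv_nonneg.2 hc.le)]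
  have hmaps : MapsTo (fun z => c⁻¹ • (z - x₀)) X ((fun w => x₀ + c • w) ⁻¹' X) := fun z hz => by
    simpa [smul_smul, hc.ne'] using hz
  have hnorm : ‖x₀ + c • u - (x₀ + c • v)‖ = c * ‖u - v‖ := by
    rw [add_sub_add_left_eq_sub, ← smul_sub, norm_smul, Real.norm_of_nonneg hc.le]
  calc innerDist _ u v ≤ c⁻¹.toNNReal * innerDist X (x₀ + c • u) (x₀ + c • v) := by
        simpa [hc.ne'] using innerDist_map_le (by simpa using hc) hφ hmaps (x₀ + c • u) (x₀ + c • v)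
    _ ≤ c⁻¹.toNNReal * ENNReal.ofReal (lam * (c * ‖u - v‖)) := by
        rw [← hnorm]
        gcongr
        exact h _ hu _ hv
    _ = ENNReal.ofReal (lam * ‖u - v‖) := by
        rw [← ENNReal.ofReal, ← ENNReal.ofReal_mul (inv_nonneg.2 hc.le)]
        congr 1
        field_simp

def IsTangentConeAt (X : Set E) (x₀ : E) (T : Set E) : Prop :=
  ∀ t : ℕ → ℝ, (∀ j, 0 < t j) → Tendsto t atTop (𝓝 0) → coneOver (dirSeqAt X x₀ t) = T

theorem norm_eq_one_of_mem_dirSeqAt {X : Set E} {x₀ : E} {t : ℕ → ℝ} (ht : ∀ j, 0 < t j)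
    {v : E} (hv : v ∈ dirSeqAt X x₀ t) : ‖v‖ = 1 := by
  obtain ⟨x, j₀, -, hxt, hxv⟩ := hv
  refine tendsto_nhds_unique hxv.norm (tendsto_const_nhds.congr' ?_)
  filter_upwards [eventually_ge_atTop j₀] with j hj
  rw [norm_smul, Real.norm_of_nonneg (inv_nonneg.2 (ht j).le), hxt j hj,
    inv_mul_cancel₀ (ht j).ne']

variable {X T : Set E} {x₀ : E} {t : ℕ → ℝ}

theorem IsTangentConeAt.exists_tendsto (hT : IsTangentConeAt X x₀ T) {z : E} (hz : z ∈ T)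
    (ht : ∀ j, 0 < t j) (ht0 : Tendsto t atTop (𝓝 0)) :
    ∃ w : ℕ → E, (∀ j, x₀ + t j • w j ∈ X) ∧ Tendsto w atTop (𝓝 z) := by
  -- sample `X` at the scales `(‖z‖ + t j) * t j`: rescaling by `t j` instead multiplies the
  -- unit directions by `‖z‖ + t j → ‖z‖`
  set s : ℕ → ℝ := fun j => (‖z‖ + t j) * t j
  have hs : ∀ j, 0 < s j := fun j => by have := ht j; positivity
  have hs0 : Tendsto s atTop (𝓝 0) := by
    simpa using (tendsto_const_nhds.add ht0).mul ht0
  rw [← hT s hs hs0] at hz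
  obtain ⟨r, hr, v, hv, rfl⟩ := hz
  have hrv : ‖r • v‖ = r := by
    rw [norm_smul, norm_eq_one_of_mem_dirSeqAt hs hv, mul_one, Real.norm_of_nonneg hr]
  obtain ⟨x, -, hxX, -, hxv⟩ := hv
  refine ⟨fun j => (t j)⁻¹ • (x j - x₀), fun j => ?_, ?_⟩
  · simpa [smul_smul, (ht j).ne'] using (hxX j).1
  · have : Tendsto (fun j => (‖r • v‖ + t j) • ((s j)⁻¹ • (x j - x₀))) atTop
        (𝓝 ((‖r • v‖ + 0) • v)) := (tendsto_const_nhds.add ht0).smul hxv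
    rw [add_zero, hrv] at this
    refine this.congr fun j => ?_
    simp only [s, smul_smul, hrv]
    congr 1
    field_simp [(add_pos_of_nonneg_of_pos hr (ht j)).ne']

theorem IsTangentConeAt.mem_of_tendsto (hT : IsTangentConeAt X x₀ T) (ht : ∀ j, 0 < t j)
    (ht0 : Tendsto t atTop (𝓝 0)) {w : ℕ → E} (hw : ∀ j, x₀ + t j • w j ∈ X)
    (hw0 : ∀ j, w j ≠ 0) {z : E} (hz : Tendsto w atTop (𝓝 z)) (hz0 : z ≠ 0) : z ∈ T := by
  set s : ℕ → ℝ := fun j => t j * ‖w j‖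
  have hs : ∀ j, 0 < s j := fun j => mul_pos (ht j) (norm_pos_iff.2 (hw0 j))
  have hs0 : Tendsto s atTop (𝓝 0) := by simpa using ht0.mul hz.norm
  have hnormalize : ContinuousAt (fun u : E => ‖u‖⁻¹ • u) z :=
    (continuous_norm.continuousAt.inv₀ (norm_ne_zero_iff.2 hz0)).smul continuousAt_id
  have hdir : ‖z‖⁻¹ • z ∈ dirSeqAt X x₀ s := by
    refine ⟨fun j => x₀ + t j • w j, 0, fun j => ⟨hw j, ?_⟩, fun j _ => ?_,
      (hnormalize.tendsto.comp hz).congr fun j => ?_⟩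
    · simp [(ht j).ne', hw0 j]
    · simp [s, norm_smul, Real.norm_of_nonneg (ht j).le]
    · simp only [Function.comp, s, add_sub_cancel_left, smul_smul, mul_inv]
      congr 1
      field_simp [(ht j).ne']
  rw [← hT s hs hs0]
  exact ⟨‖z‖, norm_nonneg z, _, hdir, (smul_inv_smul₀ (norm_ne_zero_iff.2 hz0) z).symm⟩

theorem IsTangentConeAt.mem_of_mapClusterPt (hT : IsTangentConeAt X x₀ T) (hT₀ : T.Nonempty)
    (ht : ∀ j, 0 < t j) (ht0 : Tendsto t atTop (𝓝 0)) {w : ℕ → E}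
    (hw : ∀ j, x₀ + t j • w j ∈ X) {z : E} (hz : MapClusterPt z atTop w) : z ∈ T := by
  rcases eq_or_ne z 0 with rfl | hz0
  · obtain ⟨y, hy⟩ := hT₀
    rw [← hT t ht ht0] at hy ⊢
    obtain ⟨-, -, v, hv, -⟩ := hy
    exact ⟨0, le_rfl, v, hv, (zero_smul ℝ v).symm⟩
  obtain ⟨φ, hφ, hφz⟩ := hz.tendsto_subseq
  obtain ⟨K, hK⟩ := eventually_atTop.1 (hφz.eventually_ne hz0)
  have hshift : Tendsto (· + K) atTop atTop := tendsto_add_atTop_nat K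
  exact hT.mem_of_tendsto (fun k => ht _) (ht0.comp (hφ.tendsto_atTop.comp hshift))
    (fun k => hw _) (fun k => hK _ (Nat.le_add_left K k)) (hφz.comp hshift) hz0

end Cone

theorem stmt6_general {m : ℕ} (X : Set (EuclideanSpace ℝ (Fin m)))
    (x₀ : EuclideanSpace ℝ (Fin m))
    (T : Set (EuclideanSpace ℝ (Fin m)))
    (hT : ∀ t : ℕ → ℝ, (∀ j, 0 < t j) → Filter.Tendsto t Filter.atTop (nhds 0) →
      coneOver (dirSeqAt X x₀ t) = T)
    (lam : ℝ)
    (hne : ∀ x ∈ X, ∀ y ∈ X, innerDist X x y ≤ ENNReal.ofReal (lam * ‖x - y‖)) :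
    ∀ x ∈ T, ∀ y ∈ T, innerDist T x y ≤ ENNReal.ofReal ((1 + lam) * ‖x - y‖) := by
  intro x hx y hy
  set t : ℕ → ℝ := fun j => 1 / ((j : ℝ) + 1)
  have ht : ∀ j, 0 < t j := fun j => by positivity
  have ht0 : Tendsto t atTop (𝓝 0) := tendsto_one_div_add_atTop_nhds_zero_nat
  obtain ⟨wx, hwxX, hwx⟩ := IsTangentConeAt.exists_tendsto hT hx ht ht0
  obtain ⟨wy, hwyX, hwy⟩ := IsTangentConeAt.exists_tendsto hT hy ht ht0
  have hdist : innerDist T x y ≤ ENNReal.ofReal (lam * ‖x - y‖) :=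
    innerDist_le_of_tendsto (Y := fun j => (fun w => x₀ + t j • w) ⁻¹' X)
      (fun _ hw _ hz => IsTangentConeAt.mem_of_mapClusterPt hT ⟨x, hx⟩ ht ht0 hw hz)
      hwx hwy ((hwx.sub hwy).norm.const_mul lam) fun j =>
        LipschitzNormallyEmbeddedWith.preimage_homothety hne x₀ (ht j) _ (hwxX j) _ (hwyX j)
  exact hdist.trans (ENNReal.ofReal_le_ofReal (by linarith [norm_nonneg (x - y)]))

/-- if `X ∋ x₀` has a unique tangent cone `T` at `x₀` and `X` is Lipschitz
normally embedded with constant `lam`, then `T` is Lipschitz normally embedded with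
constant at most `1 + lam`. -/
theorem stmt6 {m : ℕ} (X : Set (EuclideanSpace ℝ (Fin m)))
    (x₀ : EuclideanSpace ℝ (Fin m)) (h0 : x₀ ∈ X)
    (T : Set (EuclideanSpace ℝ (Fin m)))
    (hT : ∀ t : ℕ → ℝ, (∀ j, 0 < t j) → Filter.Tendsto t Filter.atTop (nhds 0) →
      coneOver (dirSeqAt X x₀ t) = T)
    (lam : ℝ) (hlam : 1 ≤ lam)
    (hne : ∀ x ∈ X, ∀ y ∈ X, innerDist X x y ≤ ENNReal.ofReal (lam * ‖x - y‖)) :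
    ∀ x ∈ T, ∀ y ∈ T, innerDist T x y ≤ ENNReal.ofReal ((1 + lam) * ‖x - y‖) :=
  stmt6_general X x₀ T hT lam hne
end

section
/- The set M = {(x,y,z,1) ∈ ℝ⁴ : (x-1)²+y²+z²=1} ∪ {(x,y,z,1) ∈ ℝ⁴ : (x+1)²+y²+z²=1} (two unit spheres tangent at (0,0,0,1)) is not Lipschitz normally embedded: there is no constant C ≥ 1 with d_M(p,q) ≤ C‖p-q‖ for all p,q ∈ M. -/
open Set Filter Metric

/-- Points of `ℝ⁴` from four coordinates. -/
noncomputable def mk4 (a b c d : ℝ) : EuclideanSpace ℝ (Fin 4) :=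
  (WithLp.equiv 2 (Fin 4 → ℝ)).symm ![a, b, c, d]

/-- The union of the two unit spheres in the hyperplane `{t = 1} ⊆ ℝ⁴` centered at
`(±1, 0, 0, 1)`, tangent at `(0,0,0,1)`. -/
def M4 : Set (EuclideanSpace ℝ (Fin 4)) :=
  {p | p 3 = 1 ∧ ((p 0 - 1) ^ 2 + (p 1) ^ 2 + (p 2) ^ 2 = 1 ∨
    (p 0 + 1) ^ 2 + (p 1) ^ 2 + (p 2) ^ 2 = 1)}

/-!
A path in `M4` from a point with nonnegative first coordinate to one with nonpositive first
coordinate must cross the hyperplane `x = 0`, which meets `M4` only in the tangency point `o`.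
So for the points `α(s) = (s, √(2s - s²), 0, 1)` and `β(s) = (-s, √(2s - s²), 0, 1)` the inner
distance is at least `‖α(s) - o‖ + ‖o - β(s)‖ = 2√(2s)`, whereas `‖α(s) - β(s)‖ = 2s`; the ratio
`√(2/s)` is unbounded as `s → 0`.
-/

section PathLength

variable {E : Type*} [NormedAddCommGroup E]

theorem IsPathIn.edist_add_edist_le_pathLength {X : Set E} {x y : E} {γ : ℝ → E}
    (hγ : IsPathIn X x y γ) {t : ℝ} (ht : t ∈ Icc (0 : ℝ) 1) :
    edist x (γ t) + edist (γ t) y ≤ pathLength γ := by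
  obtain ⟨-, -, rfl, rfl⟩ := hγ
  calc edist (γ 0) (γ t) + edist (γ t) (γ 1)
      ≤ eVariationOn γ (Icc 0 1 ∩ Icc 0 t) + eVariationOn γ (Icc 0 1 ∩ Icc t 1) :=
        add_le_add (eVariationOn.edist_le γ ⟨left_mem_Icc.2 zero_le_one, left_mem_Icc.2 ht.1⟩
            ⟨ht, right_mem_Icc.2 ht.1⟩)
          (eVariationOn.edist_le γ ⟨ht, left_mem_Icc.2 ht.2⟩
            ⟨right_mem_Icc.2 zero_le_one, right_mem_Icc.2 ht.2⟩)
    _ = pathLength γ := by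
        rw [eVariationOn.Icc_add_Icc γ ht.1 ht.2 ht, inter_self]; rfl

theorem edist_add_edist_le_innerDist {X : Set E} {x y z : E}
    (hz : ∀ γ, IsPathIn X x y γ → ∃ t ∈ Icc (0 : ℝ) 1, γ t = z) :
    edist x z + edist z y ≤ innerDist X x y := by
  refine le_iInf₂ fun γ hγ => ?_
  obtain ⟨t, ht, rfl⟩ := hz γ hγ
  exact hγ.edist_add_edist_le_pathLength ht

end PathLength

@[simp]
theorem mk4_apply (a b c d : ℝ) (i : Fin 4) : mk4 a b c d i = ![a, b, c, d] i := rfl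

theorem mk4_sub_mk4 (a b c d a' b' c' d' : ℝ) :
    mk4 a b c d - mk4 a' b' c' d' = mk4 (a - a') (b - b') (c - c') (d - d') := by
  ext i; fin_cases i <;> simp

theorem norm_mk4 (a b c d : ℝ) : ‖mk4 a b c d‖ = √(a ^ 2 + b ^ 2 + c ^ 2 + d ^ 2) := by
  simp [EuclideanSpace.norm_eq, Fin.sum_univ_four, add_assoc]

noncomputable def tangencyPoint : EuclideanSpace ℝ (Fin 4) := mk4 0 0 0 1

theorem eq_tangencyPoint_of_mem_M4 {p : EuclideanSpace ℝ (Fin 4)} (hp : p ∈ M4)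
    (h0 : p 0 = 0) : p = tangencyPoint := by
  obtain ⟨h3, hsph⟩ := hp
  have h12 : p 1 = 0 ∧ p 2 = 0 := by
    rw [h0] at hsph
    constructor <;> rcases hsph with h | h <;> nlinarith [sq_nonneg (p 1), sq_nonneg (p 2)]
  ext i; fin_cases i <;> simp [tangencyPoint, h0, h12, h3]

theorem IsPathIn.exists_eq_tangencyPoint {x y : EuclideanSpace ℝ (Fin 4)}
    {γ : ℝ → EuclideanSpace ℝ (Fin 4)} (hγ : IsPathIn M4 x y γ) (hx : 0 ≤ x 0) (hy : y 0 ≤ 0) :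
    ∃ t ∈ Icc (0 : ℝ) 1, γ t = tangencyPoint := by
  obtain ⟨hcont, hmaps, rfl, rfl⟩ := hγ
  obtain ⟨t, ht, hγt⟩ := intermediate_value_Icc' zero_le_one
    ((EuclideanSpace.proj (0 : Fin 4)).continuous.comp_continuousOn hcont) ⟨hy, hx⟩
  exact ⟨t, ht, eq_tangencyPoint_of_mem_M4 (hmaps ht) hγt⟩

section Arcs

variable {s : ℝ}

noncomputable def rightArc (s : ℝ) : EuclideanSpace ℝ (Fin 4) := mk4 s (√(2 * s - s ^ 2)) 0 1

noncomputable def leftArc (s : ℝ) : EuclideanSpace ℝ (Fin 4) := mk4 (-s) (√(2 * s - s ^ 2)) 0 1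

theorem rightArc_mem_M4 (h0 : 0 ≤ s) (h2 : s ≤ 2) : rightArc s ∈ M4 := by
  refine ⟨rfl, Or.inl ?_⟩
  change (s - 1) ^ 2 + √(2 * s - s ^ 2) ^ 2 + 0 ^ 2 = 1
  rw [Real.sq_sqrt (by nlinarith)]
  ring

theorem leftArc_mem_M4 (h0 : 0 ≤ s) (h2 : s ≤ 2) : leftArc s ∈ M4 := by
  refine ⟨rfl, Or.inr ?_⟩
  change (-s + 1) ^ 2 + √(2 * s - s ^ 2) ^ 2 + 0 ^ 2 = 1
  rw [Real.sq_sqrt (by nlinarith)]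
  ring

theorem norm_rightArc_sub_leftArc (h0 : 0 ≤ s) : ‖rightArc s - leftArc s‖ = 2 * s := by
  rw [rightArc, leftArc, mk4_sub_mk4, norm_mk4, ← Real.sqrt_sq (by positivity : 0 ≤ 2 * s)]
  congr 1
  ring

theorem norm_rightArc_sub_tangencyPoint (h0 : 0 ≤ s) (h2 : s ≤ 2) :
    ‖rightArc s - tangencyPoint‖ = √(2 * s) := by
  rw [rightArc, tangencyPoint, mk4_sub_mk4, norm_mk4]
  congr 1
  simp [Real.sq_sqrt (by nlinarith : 0 ≤ 2 * s - s ^ 2)]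

theorem norm_tangencyPoint_sub_leftArc (h0 : 0 ≤ s) (h2 : s ≤ 2) :
    ‖tangencyPoint - leftArc s‖ = √(2 * s) := by
  rw [leftArc, tangencyPoint, mk4_sub_mk4, norm_mk4]
  congr 1
  simp [Real.sq_sqrt (by nlinarith : 0 ≤ 2 * s - s ^ 2)]

theorem ofReal_two_mul_sqrt_le_innerDist (h0 : 0 ≤ s) (h2 : s ≤ 2) :
    ENNReal.ofReal (2 * √(2 * s)) ≤ innerDist M4 (rightArc s) (leftArc s) := by
  refine le_trans (le_of_eq ?_) (edist_add_edist_le_innerDist fun γ hγ =>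
    hγ.exists_eq_tangencyPoint (by simpa [rightArc]) (by simpa [leftArc]))
  rw [edist_dist, edist_dist, dist_eq_norm, dist_eq_norm, norm_rightArc_sub_tangencyPoint h0 h2,
    norm_tangencyPoint_sub_leftArc h0 h2, ← ENNReal.ofReal_add (by positivity) (by positivity),
    two_mul]

end Arcs

/-- the two tangent spheres `M ⊆ ℝ⁴` are not Lipschitz normally embedded. -/
theorem stmt10 :
    ¬ ∃ C : ℝ, 1 ≤ C ∧ ∀ p ∈ M4, ∀ q ∈ M4,
      innerDist M4 p q ≤ ENNReal.ofReal (C * ‖p - q‖) := by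
  rintro ⟨C, hC, h⟩
  set s : ℝ := (C ^ 2)⁻¹
  have hs0 : 0 < s := by positivity
  have hCs : C ^ 2 * s = 1 := mul_inv_cancel₀ (by positivity)
  have hs2 : s ≤ 2 := by nlinarith
  have hle : 2 * √(2 * s) ≤ C * (2 * s) := by
    have := (ofReal_two_mul_sqrt_le_innerDist hs0.le hs2).trans
      (h _ (rightArc_mem_M4 hs0.le hs2) _ (leftArc_mem_M4 hs0.le hs2))
    rwa [norm_rightArc_sub_leftArc hs0.le, ENNReal.ofReal_le_ofReal_iff (by positivity)] at this
  have hsq : 2 * s ≤ (C * s) ^ 2 := by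
    rw [← Real.sqrt_le_left (by positivity)]
    linarith
  have hCs_sq : (C * s) ^ 2 = s := by rw [mul_pow, sq s, ← mul_assoc, hCs, one_mul]
  linarith
end
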